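/- arXiv:1101.4657 — 2 statements merged into one kernel-verified Lean document; each statement's English description precedes it below -/
import Mathlib

section
/- Let V be a set, Q an algebra of subsets of V, and D the directed set of finite Q-measurable partitions of V. Suppose (x_I)_{I ∈ D} is a family with x_I ∈ Δ_I for each I, satisfying the compatibility condition f_{JI} x_J = x_I whenever J refines I. Then the set function μ : Q → [0,1] defined by μ(A) := x_{(A, A^c)}(A) for A ∉ {∅, V}, μ(∅) = 0, μ(V) = 1, is a finitely additive probability charge on Q. -/
open Finset
open scoped Classical

/-- A finitely additive probability charge on an algebra `Q` of subsets of `V`. -/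
def IsProbCharge {V : Type*} (Q : Set (Set V)) (μ : Set V → ℝ) : Prop :=
  μ ∅ = 0 ∧ μ Set.univ = 1 ∧ (∀ A ∈ Q, 0 ≤ μ A) ∧
    ∀ A ∈ Q, ∀ B ∈ Q, Disjoint A B → μ (A ∪ B) = μ A + μ B

/-- A compatible family `(x_I)_{I ∈ D}` of points of the simplices `Δ_I`
(indexed by the finite `Q`-measurable partitions `D`, with `f_{JI} x_J = x_I` whenever `J`
refines `I`) induces, via `μ(A) := x_{(A,Aᶜ)}(A)`, a finitely additive probability charge
on `Q`. -/
theorem stmt3 {V : Type*} [DecidableEq (Set V)]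
    (Q : Set (Set V)) (hQ : MeasureTheory.IsSetAlgebra Q)
    (D : Set (Finset (Set V)))
    (hD : D = {P : Finset (Set V) | (∀ A ∈ P, A ∈ Q ∧ A ≠ ∅) ∧
      (∀ A ∈ P, ∀ B ∈ P, A ≠ B → Disjoint A B) ∧ ⋃₀ (↑P : Set (Set V)) = Set.univ})
    (x : Finset (Set V) → Set V → ℝ)
    (hsimplex : ∀ P ∈ D, (∀ A ∈ P, 0 ≤ x P A) ∧ ∑ A ∈ P, x P A = 1)
    (hcompat : ∀ P ∈ D, ∀ P' ∈ D, (∀ B ∈ P', ∃ A ∈ P, B ⊆ A) →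
      ∀ A ∈ P, x P A = ∑ B ∈ P'.filter (fun B => B ⊆ A), x P' B)
    (μ : Set V → ℝ)
    (hμ : μ = fun A => if A = ∅ then 0 else if A = Set.univ then 1
      else x ({A, Aᶜ} : Finset (Set V)) A) :
    IsProbCharge Q μ := by
  -- the type must be nonempty, else the empty partition contradicts `hsimplex`
  have hVne : Nonempty V := by
    by_contra h
    haveI : IsEmpty V := not_nonempty_iff.mp h
    have hmem : (∅ : Finset (Set V)) ∈ D := by
      rw [hD]
      refine ⟨by simp, by simp, ?_⟩
      simp [Set.eq_empty_of_isEmpty]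
    have := (hsimplex _ hmem).2
    simp at this
  -- basic facts
  have hne : ∀ A B : Set V, A ≠ ∅ → Disjoint A B → A ≠ B := by
    intro A B hA hd h
    subst h
    exact hA (by simpa using disjoint_self.mp hd)
  have hmemD : ∀ P : Finset (Set V), (∀ A ∈ P, A ∈ Q ∧ A ≠ ∅) →
      (∀ A ∈ P, ∀ B ∈ P, A ≠ B → Disjoint A B) →
      ⋃₀ (↑P : Set (Set V)) = Set.univ → P ∈ D := by
    intro P h1 h2 h3; rw [hD]; exact ⟨h1, h2, h3⟩
  have hpair : ∀ A : Set V, A ∈ Q → A ≠ ∅ → A ≠ Set.univ →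
      ({A, Aᶜ} : Finset (Set V)) ∈ D := by
    intro A hAQ hA0 hAU
    apply hmemD
    · intro C hC
      simp only [mem_insert, mem_singleton] at hC
      rcases hC with rfl | rfl
      · exact ⟨hAQ, hA0⟩
      · exact ⟨hQ.compl_mem hAQ, by simpa [Set.compl_empty_iff] using hAU⟩
    · intro C hC Cb hCb hne'
      simp only [mem_insert, mem_singleton] at hC hCb
      rcases hC with rfl | rfl <;> rcases hCb with rfl | rfl <;>
        first
        | exact absurd rfl hne'
        | exact disjoint_compl_right
        | exact disjoint_compl_left
    · simp only [coe_insert, coe_singleton, Set.sUnion_insert, Set.sUnion_singleton]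
      exact Set.union_compl_self A
  have hval : ∀ A : Set V, A ≠ ∅ → A ≠ Set.univ →
      μ A = x ({A, Aᶜ} : Finset (Set V)) A := by
    intro A h1 h2
    rw [hμ]
    simp [h1, h2]
  have hμ0 : μ ∅ = 0 := by rw [hμ]; simp
  have hμ1 : μ Set.univ = 1 := by
    rw [hμ]
    simp [Set.empty_ne_univ, (Set.empty_ne_univ).symm]
  refine ⟨hμ0, hμ1, ?_, ?_⟩
  · -- nonnegativity
    intro A hAQ
    by_cases hA0 : A = ∅
    · rw [hA0, hμ0]
    by_cases hAU : A = Set.univ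
    · rw [hAU, hμ1]; norm_num
    rw [hval A hA0 hAU]
    exact (hsimplex _ (hpair A hAQ hA0 hAU)).1 A (mem_insert_self _ _)
  · -- additivity
    intro A hAQ B hBQ hAB
    by_cases hA0 : A = ∅
    · subst hA0; rw [Set.empty_union, hμ0]; ring
    by_cases hB0 : B = ∅
    · subst hB0; rw [Set.union_empty, hμ0]; ring
    have hAne : A ≠ B := hne A B hA0 hAB
    have hAU : A ≠ Set.univ := by
      intro h; subst h
      exact hB0 (by simpa using hAB)
    have hBU : B ≠ Set.univ := by
      intro h; subst h
      exact hA0 (by simpa using hAB.symm)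
    have hAcne : A ≠ Aᶜ := hne A Aᶜ hA0 disjoint_compl_right
    have hPA : ({A, Aᶜ} : Finset (Set V)) ∈ D := hpair A hAQ hA0 hAU
    have hPB : ({B, Bᶜ} : Finset (Set V)) ∈ D := hpair B hBQ hB0 hBU
    by_cases hUB : A ∪ B = Set.univ
    · -- B = Aᶜ
      have hBA : B = Aᶜ := by
        apply Set.Subset.antisymm
        · exact fun v hv hA => Set.disjoint_left.mp hAB hA hv
        · intro v hv
          have hv' : v ∈ A ∪ B := hUB ▸ Set.mem_univ v
          rcases hv' with h | h
          · exact absurd h hv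
          · exact h
      rw [hUB, hμ1, hval A hA0 hAU, hval B hB0 hBU]
      have hsum := (hsimplex _ hPA).2
      rw [Finset.sum_pair hAcne] at hsum
      rw [hBA]
      have : ({Aᶜ, Aᶜᶜ} : Finset (Set V)) = {A, Aᶜ} := by
        rw [compl_compl, pair_comm]
      rw [this, ← hsum]
    · -- main case: A ∪ B ≠ univ
      have hAB0 : A ∪ B ≠ ∅ := fun h => hA0 (Set.union_empty_iff.mp h).1
      have hABQ : A ∪ B ∈ Q := hQ.union_mem hAQ hBQ
      have hC0 : (A ∪ B)ᶜ ≠ ∅ := fun h => hUB (Set.compl_empty_iff.mp h)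
      have hCQ : (A ∪ B)ᶜ ∈ Q := hQ.compl_mem hABQ
      have hAC : Disjoint A (A ∪ B)ᶜ :=
        disjoint_compl_right.mono_left Set.subset_union_left
      have hBC : Disjoint B (A ∪ B)ᶜ :=
        disjoint_compl_right.mono_left Set.subset_union_right
      have hP0 : ({A ∪ B, (A ∪ B)ᶜ} : Finset (Set V)) ∈ D := hpair _ hABQ hAB0 hUB
      have hP' : ({A, B, (A ∪ B)ᶜ} : Finset (Set V)) ∈ D := by
        apply hmemD
        · intro X hX
          simp only [mem_insert, mem_singleton] at hX
          rcases hX with rfl | rfl | rfl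
          · exact ⟨hAQ, hA0⟩
          · exact ⟨hBQ, hB0⟩
          · exact ⟨hCQ, hC0⟩
        · intro X hX Y hY hXY
          simp only [mem_insert, mem_singleton] at hX hY
          rcases hX with rfl | rfl | rfl <;> rcases hY with rfl | rfl | rfl <;>
            first
            | exact absurd rfl hXY
            | exact hAB
            | exact hAB.symm
            | exact hAC
            | exact hAC.symm
            | exact hBC
            | exact hBC.symm
        · simp only [coe_insert, coe_singleton, Set.sUnion_insert, Set.sUnion_singleton]
          rw [← Set.union_assoc, Set.union_compl_self]
      have hnsubC : ¬ (A ∪ B)ᶜ ⊆ A ∪ B := by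
        intro h
        exact hC0 (Set.eq_empty_iff_forall_notMem.mpr fun v hv => hv (h hv))
      have hnsubBA : ¬ B ⊆ A := by
        intro h
        exact hB0 (Set.eq_empty_iff_forall_notMem.mpr fun v hv =>
          Set.disjoint_left.mp hAB (h hv) hv)
      have hnsubCA : ¬ (A ∪ B)ᶜ ⊆ A := by
        intro h
        exact hC0 (Set.eq_empty_iff_forall_notMem.mpr fun v hv =>
          Set.disjoint_right.mp hAC hv (h hv))
      have hnsubAB : ¬ A ⊆ B := by
        intro h
        exact hA0 (Set.eq_empty_iff_forall_notMem.mpr fun v hv =>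
          Set.disjoint_left.mp hAB hv (h hv))
      have hnsubCB : ¬ (A ∪ B)ᶜ ⊆ B := by
        intro h
        exact hC0 (Set.eq_empty_iff_forall_notMem.mpr fun v hv =>
          Set.disjoint_right.mp hBC hv (h hv))
      -- filter computations
      have hfilt0 : ({A, B, (A ∪ B)ᶜ} : Finset (Set V)).filter (fun X => X ⊆ A ∪ B)
          = {A, B} := by
        ext X
        simp only [mem_filter, mem_insert, mem_singleton]
        constructor
        · rintro ⟨rfl | rfl | rfl, hs⟩
          · exact Or.inl rfl
          · exact Or.inr rfl
          · exact absurd hs hnsubC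
        · rintro (rfl | rfl)
          · exact ⟨Or.inl rfl, Set.subset_union_left⟩
          · exact ⟨Or.inr (Or.inl rfl), Set.subset_union_right⟩
      have hfiltA : ({A, B, (A ∪ B)ᶜ} : Finset (Set V)).filter (fun X => X ⊆ A)
          = {A} := by
        ext X
        simp only [mem_filter, mem_insert, mem_singleton]
        constructor
        · rintro ⟨rfl | rfl | rfl, hs⟩
          · exact rfl
          · exact absurd hs hnsubBA
          · exact absurd hs hnsubCA
        · rintro rfl
          exact ⟨Or.inl rfl, le_rfl⟩
      have hfiltB : ({A, B, (A ∪ B)ᶜ} : Finset (Set V)).filter (fun X => X ⊆ B)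
          = {B} := by
        ext X
        simp only [mem_filter, mem_insert, mem_singleton]
        constructor
        · rintro ⟨rfl | rfl | rfl, hs⟩
          · exact absurd hs hnsubAB
          · exact rfl
          · exact absurd hs hnsubCB
        · rintro rfl
          exact ⟨Or.inr (Or.inl rfl), le_rfl⟩
      -- refinements
      have refines0 : ∀ X ∈ ({A, B, (A ∪ B)ᶜ} : Finset (Set V)),
          ∃ Y ∈ ({A ∪ B, (A ∪ B)ᶜ} : Finset (Set V)), X ⊆ Y := by
        intro X hX
        simp only [mem_insert, mem_singleton] at hX
        rcases hX with h | h | h <;> rw [h]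
        · exact ⟨A ∪ B, mem_insert_self _ _, Set.subset_union_left⟩
        · exact ⟨A ∪ B, mem_insert_self _ _, Set.subset_union_right⟩
        · exact ⟨(A ∪ B)ᶜ, by simp, le_rfl⟩
      have refinesA : ∀ X ∈ ({A, B, (A ∪ B)ᶜ} : Finset (Set V)),
          ∃ Y ∈ ({A, Aᶜ} : Finset (Set V)), X ⊆ Y := by
        intro X hX
        simp only [mem_insert, mem_singleton] at hX
        rcases hX with h | h | h <;> rw [h]
        · exact ⟨A, mem_insert_self _ _, le_rfl⟩
        · exact ⟨Aᶜ, by simp, fun v hv hA => Set.disjoint_left.mp hAB hA hv⟩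
        · exact ⟨Aᶜ, by simp, fun v hv hA => Set.disjoint_left.mp hAC hA hv⟩
      have refinesB : ∀ X ∈ ({A, B, (A ∪ B)ᶜ} : Finset (Set V)),
          ∃ Y ∈ ({B, Bᶜ} : Finset (Set V)), X ⊆ Y := by
        intro X hX
        simp only [mem_insert, mem_singleton] at hX
        rcases hX with h | h | h <;> rw [h]
        · exact ⟨Bᶜ, by simp, fun v hv hB => Set.disjoint_left.mp hAB hv hB⟩
        · exact ⟨B, mem_insert_self _ _, le_rfl⟩
        · exact ⟨Bᶜ, by simp, fun v hv hB => Set.disjoint_left.mp hBC hB hv⟩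
      have e0 := hcompat _ hP0 _ hP' refines0 (A ∪ B) (mem_insert_self _ _)
      rw [hfilt0, Finset.sum_pair hAne] at e0
      have eA := hcompat _ hPA _ hP' refinesA A (mem_insert_self _ _)
      rw [hfiltA, Finset.sum_singleton] at eA
      have eB := hcompat _ hPB _ hP' refinesB B (by simp)
      rw [hfiltB, Finset.sum_singleton] at eB
      rw [hval (A ∪ B) hAB0 hUB, hval A hA0 hAU, hval B hB0 hBU, e0, eA, eB]
end

section
/- Let V be a Polish space and C(Q) the set of probability charges on a countable generating algebra Q of subsets of V, viewed as a subset of [0,1]^Q with the product σ-algebra. Then the subset M(Q) ⊆ C(Q) of σ-additive probability charges is measurable with respect to the trace of the product σ-algebra on C(Q). -/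
open MeasureTheory

/-- A finitely additive probability charge on the algebra `Q`, viewed as a point of
`[0,1]^Q` (here a function `↥Q → ℝ`). -/
def IsChargeOn {V : Type*} (Q : Set (Set V)) (f : ↥Q → ℝ) : Prop :=
  (∀ e : ↥Q, (e : Set V) = ∅ → f e = 0) ∧
    (∀ e : ↥Q, (e : Set V) = Set.univ → f e = 1) ∧
    (∀ e : ↥Q, 0 ≤ f e) ∧
    ∀ a b c : ↥Q, Disjoint (a : Set V) (b : Set V) → (c : Set V) = ↑a ∪ ↑b →
      f c = f a + f b

/-- σ-additivity of a charge on the algebra `Q`: countable additivity along every sequence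
of pairwise disjoint sets of `Q` whose union again lies in `Q`. -/
def IsSigmaAddOn {V : Type*} (Q : Set (Set V)) (f : ↥Q → ℝ) : Prop :=
  ∀ (a : ℕ → ↥Q) (c : ↥Q),
    Pairwise (Function.onFun Disjoint (fun n => (a n : Set V))) →
    (c : Set V) = ⋃ n, (a n : Set V) →
    HasSum (fun n => f (a n)) (f c)

/-!
A standard Borel space embeds measurably into `ℝ`, and a probability measure on `ℝ` is
recovered, injectively and measurably, from the values of its distribution function at the
rationals; these value sequences form a Borel subset of the Polish space `ℚ → ℝ`. By
Carathéodory's extension theorem the σ-additive charges on `Q` are exactly the restrictions to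
`Q` of probability measures on `V`, and such a restriction determines the measure since `Q` is
a generating π-system. So the σ-additive charges are the injective measurable image of a Borel
subset of a Polish space in the countably separated space `ℝ^Q`, hence measurable by the
Lusin–Souslin theorem.
-/

open MeasureTheory Set Filter Topology ProbabilityTheory
open scoped ENNReal

section Charges

variable {V : Type*} [MeasurableSpace V] {Q : Set (Set V)}

variable (Q) in
noncomputable def chargeMap (μ : Measure V) : Q → ℝ := fun A => μ.real A

lemma isChargeOn_chargeMap (hQ : ∀ A ∈ Q, MeasurableSet A) (μ : Measure V)
    [IsProbabilityMeasure μ] : IsChargeOn Q (chargeMap Q μ) := by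
  refine ⟨fun e he => by simp [chargeMap, he], fun e he => by simp [chargeMap, he],
    fun e => measureReal_nonneg, fun a b c hab hc => ?_⟩
  unfold chargeMap
  rw [hc, measureReal_union hab (hQ b b.2)]

lemma isSigmaAddOn_chargeMap (hQ : ∀ A ∈ Q, MeasurableSet A) (μ : Measure V)
    [IsProbabilityMeasure μ] : IsSigmaAddOn Q (chargeMap Q μ) := by
  intro a c hdisj hc
  have hμ : μ c = ∑' n, μ (a n) := by
    rw [hc]; exact measure_iUnion hdisj fun n => hQ _ (a n).2
  have hfin : ∑' n, μ (a n) ≠ ∞ := hμ ▸ measure_ne_top μ _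
  simpa only [chargeMap, measureReal_def, hμ,
    ENNReal.tsum_toReal_eq fun n => measure_ne_top μ _] using ENNReal.hasSum_toReal hfin

lemma exists_chargeMap_eq_of_isSigmaAddOn (hQ : IsSetAlgebra Q)
    (hgen : MeasurableSpace.generateFrom Q = ‹MeasurableSpace V›) {f : Q → ℝ}
    (hf : IsChargeOn Q f) (hσ : IsSigmaAddOn Q f) :
    ∃ μ : Measure V, IsProbabilityMeasure μ ∧ chargeMap Q μ = f := by
  classical
  obtain ⟨hf_empty, hf_univ, hf_nonneg, hf_add⟩ := hf
  let m : AddContent ℝ≥0∞ Q := hQ.isSetRing.addContent_of_union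
    (fun s => if h : s ∈ Q then ENNReal.ofReal (f ⟨s, h⟩) else 0)
    (by simp [hQ.empty_mem, hf_empty ⟨∅, hQ.empty_mem⟩ rfl])
    (fun {s t} hs ht hst => by
      simp only [hs, ht, hQ.union_mem hs ht, dite_true]
      rw [hf_add ⟨s, hs⟩ ⟨t, ht⟩ ⟨s ∪ t, hQ.union_mem hs ht⟩ hst rfl,
        ENNReal.ofReal_add (hf_nonneg _) (hf_nonneg _)])
  have hm : ∀ A : Q, m A = ENNReal.ofReal (f A) := fun A => dif_pos A.2
  have hm_sigma : m.IsSigmaSubadditive := by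
    refine isSigmaSubadditive_of_addContent_iUnion_eq_tsum hQ.isSetRing
      fun s hs hU hdisj => ?_
    have hsum := hσ (fun n => ⟨s n, hs n⟩) ⟨_, hU⟩ hdisj rfl
    rw [hm ⟨_, hU⟩, ← hsum.tsum_eq, ENNReal.ofReal_tsum_of_nonneg (fun n => hf_nonneg _)
      hsum.summable]
    exact tsum_congr fun n => (hm ⟨s n, hs n⟩).symm
  let μ := m.measure hQ.isSetRing.isSetSemiring hgen.symm.le hm_sigma
  have hμ : ∀ A : Q, μ A = ENNReal.ofReal (f A) := fun A =>
    (m.measure_eq hQ.isSetRing.isSetSemiring hgen.symm hm_sigma A.2).trans (hm A)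
  refine ⟨μ, ⟨?_⟩, funext fun A => ?_⟩
  · rw [hμ ⟨univ, hQ.univ_mem⟩, hf_univ ⟨univ, hQ.univ_mem⟩ rfl, ENNReal.ofReal_one]
  · rw [chargeMap, measureReal_def, hμ A, ENNReal.toReal_ofReal (hf_nonneg A)]

lemma measurable_chargeMap (hQ : ∀ A ∈ Q, MeasurableSet A) : Measurable (chargeMap Q) :=
  measurable_pi_lambda _ fun A => (Measure.measurable_coe (hQ A A.2)).ennreal_toReal

lemma injOn_chargeMap (hQ : IsSetAlgebra Q)
    (hgen : MeasurableSpace.generateFrom Q = ‹MeasurableSpace V›) :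
    InjOn (chargeMap Q) {μ : Measure V | IsProbabilityMeasure μ} := by
  rintro μ (hμ : IsProbabilityMeasure μ) ν (hν : IsProbabilityMeasure ν) hμν
  refine ext_of_generate_finite Q hgen.symm (fun s hs t ht _ => hQ.inter_mem hs ht)
    (fun s hs => ?_) (by rw [measure_univ, measure_univ])
  have h := congrFun hμν ⟨s, hs⟩
  exact (ENNReal.toReal_eq_toReal_iff' (measure_ne_top _ _) (measure_ne_top _ _)).1 h

lemma image_chargeMap (hQ : IsSetAlgebra Q)
    (hgen : MeasurableSpace.generateFrom Q = ‹MeasurableSpace V›) :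
    chargeMap Q '' {μ : Measure V | IsProbabilityMeasure μ} =
      {f | IsChargeOn Q f ∧ IsSigmaAddOn Q f} := by
  have hmeas : ∀ A ∈ Q, MeasurableSet A := fun A hA => hgen ▸ .basic A hA
  ext f
  constructor
  · rintro ⟨μ, hμ : IsProbabilityMeasure μ, rfl⟩
    exact ⟨isChargeOn_chargeMap hmeas μ, isSigmaAddOn_chargeMap hmeas μ⟩
  · rintro ⟨hf, hσ⟩
    exact exists_chargeMap_eq_of_isSigmaAddOn hQ hgen hf hσ

end Charges

lemma StieltjesFunction.ext_rat {F G : StieltjesFunction ℝ} (h : ∀ q : ℚ, F q = G q) :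
    F = G :=
  StieltjesFunction.ext fun x => by
    rw [← F.iInf_rat_gt_eq, ← G.iInf_rat_gt_eq]
    exact iInf_congr fun q => h q

lemma StieltjesFunction.isRatStieltjesPoint (F : StieltjesFunction ℝ)
    (h_bot : Tendsto F atBot (𝓝 0)) (h_top : Tendsto F atTop (𝓝 1)) :
    IsRatStieltjesPoint id fun q : ℚ => F q where
  mono := F.mono.comp fun _ _ h => Rat.cast_le.2 h
  tendsto_atTop_one := h_top.comp (tendsto_ratCast_atTop_iff.2 tendsto_id)
  tendsto_atBot_zero := h_bot.comp (tendsto_ratCast_atBot_iff.2 tendsto_id)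
  iInf_rat_gt_eq t := by
    rw [id, ← F.iInf_rat_gt_eq]
    exact (Equiv.subtypeEquivRight fun q => Rat.cast_lt.symm).iInf_congr fun _ => rfl

/-- The measure with distribution function `g` on `ℚ`, when `IsRatStieltjesPoint id g`;
otherwise `stieltjesOfMeasurableRat` silently replaces `g` by a default CDF. -/
noncomputable def ratCDFMeasure (g : ℚ → ℝ) : Measure ℝ :=
  (stieltjesOfMeasurableRat id measurable_id g).measure

lemma measurable_ratCDFMeasure : Measurable ratCDFMeasure :=
  measurable_measure_stieltjesOfMeasurableRat measurable_id

instance (g : ℚ → ℝ) : IsProbabilityMeasure (ratCDFMeasure g) := by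
  unfold ratCDFMeasure; infer_instance

lemma stieltjesOfMeasurableRat_id_apply_rat {g : ℚ → ℝ} (hg : IsRatStieltjesPoint id g)
    (q : ℚ) : stieltjesOfMeasurableRat id measurable_id g q = g q := by
  rw [stieltjesOfMeasurableRat_eq, toRatCDF_of_isRatStieltjesPoint hg, id]

lemma cdf_ratCDFMeasure (g : ℚ → ℝ) :
    cdf (ratCDFMeasure g) = stieltjesOfMeasurableRat id measurable_id g :=
  cdf_measure_stieltjesFunction _ (tendsto_stieltjesOfMeasurableRat_atBot _ _)
    (tendsto_stieltjesOfMeasurableRat_atTop _ _)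

lemma injOn_ratCDFMeasure : InjOn ratCDFMeasure {g | IsRatStieltjesPoint id g} := by
  intro g hg g' hg' h
  have hF := congrArg cdf h
  rw [cdf_ratCDFMeasure, cdf_ratCDFMeasure] at hF
  funext q
  rw [← stieltjesOfMeasurableRat_id_apply_rat hg, ← stieltjesOfMeasurableRat_id_apply_rat hg', hF]

lemma ratCDFMeasure_cdf (ν : Measure ℝ) [IsProbabilityMeasure ν] :
    ratCDFMeasure (fun q : ℚ => cdf ν q) = ν := by
  have hg := (cdf ν).isRatStieltjesPoint (tendsto_cdf_atBot ν) (tendsto_cdf_atTop ν)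
  rw [ratCDFMeasure, StieltjesFunction.ext_rat (stieltjesOfMeasurableRat_id_apply_rat hg),
    measure_cdf]

lemma image_ratCDFMeasure :
    ratCDFMeasure '' {g | IsRatStieltjesPoint id g} = {ν | IsProbabilityMeasure ν} := by
  ext ν
  constructor
  · rintro ⟨g, -, rfl⟩
    exact inferInstanceAs (IsProbabilityMeasure (ratCDFMeasure g))
  · rintro (hν : IsProbabilityMeasure ν)
    exact ⟨_, (cdf ν).isRatStieltjesPoint (tendsto_cdf_atBot ν) (tendsto_cdf_atTop ν),
      ratCDFMeasure_cdf ν⟩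

namespace MeasurableEmbedding

variable {V W : Type*} [MeasurableSpace V] [MeasurableSpace W] {e : V → W}

lemma measurable_comap (he : MeasurableEmbedding e) : Measurable (Measure.comap e) :=
  Measure.measurable_of_measurable_coe _ fun s hs => by
    simp_rw [Measure.comap_apply e he.injective (fun _ => he.measurableSet_image.2) _ hs]
    exact Measure.measurable_coe (he.measurableSet_image.2 hs)

lemma injOn_comap (he : MeasurableEmbedding e) :
    InjOn (Measure.comap e) {ν | ν (range e)ᶜ = 0} := by
  intro ν hν ν' hν' h
  have h' := congrArg (Measure.map e) h
  rwa [he.map_comap, he.map_comap,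
    Measure.restrict_eq_self_of_ae_mem (s := range e) (mem_ae_iff.2 hν),
    Measure.restrict_eq_self_of_ae_mem (s := range e) (mem_ae_iff.2 hν')] at h'

lemma image_comap_probabilityMeasures (he : MeasurableEmbedding e) :
    Measure.comap e '' {ν | IsProbabilityMeasure ν ∧ ν (range e)ᶜ = 0} =
      {μ | IsProbabilityMeasure μ} := by
  ext μ
  constructor
  · rintro ⟨ν, ⟨hν, hν_range⟩, rfl⟩
    refine ⟨?_⟩
    rw [Measure.comap_apply e he.injective (fun _ => he.measurableSet_image.2) _ .univ,
      image_univ, prob_compl_eq_zero_iff he.measurableSet_range |>.1 hν_range]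
  · rintro (hμ : IsProbabilityMeasure μ)
    refine ⟨μ.map e, ⟨Measure.isProbabilityMeasure_map he.measurable.aemeasurable, ?_⟩,
      he.comap_map μ⟩
    rw [he.map_apply, preimage_compl, preimage_range, compl_univ, measure_empty]

end MeasurableEmbedding

theorem exists_injOn_image_eq_probabilityMeasures (V : Type*) [MeasurableSpace V]
    [StandardBorelSpace V] :
    ∃ (T : Set (ℚ → ℝ)) (P : (ℚ → ℝ) → Measure V), MeasurableSet T ∧ Measurable P ∧
      InjOn P T ∧ P '' T = {μ | IsProbabilityMeasure μ} := by
  set e := embeddingReal V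
  have he : MeasurableEmbedding e := measurableEmbedding_embeddingReal V
  have hrange : MeasurableSet {ν : Measure ℝ | ν (range e)ᶜ = 0} :=
    Measure.measurable_coe he.measurableSet_range.compl (measurableSet_singleton 0)
  refine ⟨{g | IsRatStieltjesPoint id g} ∩ ratCDFMeasure ⁻¹' {ν | ν (range e)ᶜ = 0},
    Measure.comap e ∘ ratCDFMeasure,
    (measurableSet_isRatStieltjesPoint measurable_id).inter (measurable_ratCDFMeasure hrange),
    he.measurable_comap.comp measurable_ratCDFMeasure,
    he.injOn_comap.comp (injOn_ratCDFMeasure.mono inter_subset_left) fun g hg => hg.2, ?_⟩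
  rw [image_comp, image_inter_preimage, image_ratCDFMeasure, ← ofPred_and,
    he.image_comap_probabilityMeasures]

theorem measurableSet_setOf_isChargeOn_isSigmaAddOn {V : Type*} [MeasurableSpace V]
    [StandardBorelSpace V] {Q : Set (Set V)} (hQc : Q.Countable) (hQ : IsSetAlgebra Q)
    (hgen : MeasurableSpace.generateFrom Q = ‹MeasurableSpace V›) :
    MeasurableSet {f : Q → ℝ | IsChargeOn Q f ∧ IsSigmaAddOn Q f} := by
  have : Countable Q := hQc.to_subtype
  have hmeas : ∀ A ∈ Q, MeasurableSet A := fun A hA => hgen ▸ .basic A hA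
  obtain ⟨T, P, hT, hP, hP_inj, hP_image⟩ := exists_injOn_image_eq_probabilityMeasures V
  rw [← image_chargeMap hQ hgen, ← hP_image, ← image_comp]
  exact hT.image_of_measurable_injOn ((measurable_chargeMap hmeas).comp hP)
    ((injOn_chargeMap hQ hgen).comp hP_inj (hP_image ▸ mapsTo_image P T))

/-- For a Polish space `V` and a countable generating algebra `Q`, the set
`M(Q)` of σ-additive probability charges is a measurable subset of the set `C(Q)` of all
probability charges, with respect to the trace of the product σ-algebra of `[0,1]^Q`. -/
theorem stmt8 {V : Type*} [TopologicalSpace V] [PolishSpace V]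
    [MeasurableSpace V] [BorelSpace V]
    (Q : Set (Set V)) (hQc : Q.Countable) (hQ : IsSetAlgebra Q)
    (hgen : MeasurableSpace.generateFrom Q = ‹MeasurableSpace V›) :
    MeasurableSet {μ : {f : ↥Q → ℝ // IsChargeOn Q f} | IsSigmaAddOn Q (μ : ↥Q → ℝ)} := by
  have hS := measurableSet_setOf_isChargeOn_isSigmaAddOn hQc hQ hgen
  convert measurable_subtype_coe hS using 1
  ext μ
  simp [μ.2]
end
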